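/- arXiv:2511.05804 — 2 statements merged into one kernel-verified Lean document; each statement's English description precedes it below -/
import Mathlib

section
/- ℓ¹ stability of normalization: let a, b : Fin T → ℝ be nonnegative with A = Σ_k a_k > 0 and B = Σ_k b_k > 0. Then Σ_k |a_k/A − b_k/B| ≤ 2 · (Σ_k |a_k − b_k|) / max(A, B). -/
open Finset

/- Say `B ≤ A`. Splitting `a k / A - b k / B = (a k - b k) / A + b k (A⁻¹ - B⁻¹)`,
the first parts contribute `∑ |a k - b k| / A` and the second ones `B (B⁻¹ - A⁻¹) ≤ (A - B) / A`,
which is again at most `∑ |a k - b k| / A`. -/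

lemma mul_abs_inv_sub_inv_le {A B : ℝ} (hB : 0 ≤ B) (hBA : B ≤ A) :
    B * |A⁻¹ - B⁻¹| ≤ (A - B) / A := by
  rcases hB.eq_or_lt with rfl | hB
  · simpa using div_nonneg hBA hBA
  have hA : 0 < A := hB.trans_le hBA
  rw [abs_of_nonpos (sub_nonpos.2 (inv_anti₀ hB hBA)), neg_sub, mul_sub, mul_inv_cancel₀ hB.ne',
    sub_div, div_self hA.ne', div_eq_mul_inv]

variable {ι : Type*} (s : Finset ι)

lemma sum_sub_sum_le_sum_abs_sub (a b : ι → ℝ) :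
    ∑ k ∈ s, a k - ∑ k ∈ s, b k ≤ ∑ k ∈ s, |a k - b k| := by
  rw [← sum_sub_distrib]
  exact (le_abs_self _).trans (abs_sum_le_sum_abs _ _)

lemma sum_abs_div_sum_sub_div_sum_le_of_sum_le (a b : ι → ℝ) (hb : ∀ k ∈ s, 0 ≤ b k)
    (hBA : ∑ k ∈ s, b k ≤ ∑ k ∈ s, a k) :
    ∑ k ∈ s, |a k / ∑ j ∈ s, a j - b k / ∑ j ∈ s, b j| ≤
      2 * (∑ k ∈ s, |a k - b k|) / ∑ k ∈ s, a k := by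
  set A := ∑ k ∈ s, a k
  set B := ∑ k ∈ s, b k
  have hB : 0 ≤ B := sum_nonneg hb
  have hA : 0 ≤ A := hB.trans hBA
  have hsplit : ∀ k, a k / A - b k / B = (a k - b k) / A + b k * (A⁻¹ - B⁻¹) := fun k => by ring
  calc ∑ k ∈ s, |a k / A - b k / B|
      ≤ ∑ k ∈ s, (|a k - b k| / A + b k * |A⁻¹ - B⁻¹|) := by
        refine sum_le_sum fun k hk => ?_
        rw [hsplit]
        refine (abs_add_le _ _).trans_eq ?_
        rw [abs_div, abs_mul, abs_of_nonneg hA, abs_of_nonneg (hb k hk)]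
    _ = (∑ k ∈ s, |a k - b k|) / A + B * |A⁻¹ - B⁻¹| := by
        rw [sum_add_distrib, ← sum_div, ← sum_mul]
    _ ≤ (∑ k ∈ s, |a k - b k|) / A + (A - B) / A := by
        gcongr
        exact mul_abs_inv_sub_inv_le hB hBA
    _ ≤ 2 * (∑ k ∈ s, |a k - b k|) / A := by
        rw [two_mul, add_div]
        gcongr
        exact sum_sub_sum_le_sum_abs_sub s a b

theorem normalization_l1_stability_general
    {T : ℕ}
    (a b : Fin T → ℝ) (ha : ∀ k, 0 ≤ a k) (hb : ∀ k, 0 ≤ b k) :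
    ∑ k, |a k / (∑ j, a j) - b k / (∑ j, b j)| ≤
      2 * (∑ k, |a k - b k|) / max (∑ k, a k) (∑ k, b k) := by
  rcases le_total (∑ k, b k) (∑ k, a k) with h | h
  · rw [max_eq_left h]
    exact sum_abs_div_sum_sub_div_sum_le_of_sum_le _ a b (fun k _ => hb k) h
  · rw [max_eq_right h]
    simpa only [abs_sub_comm] using
      sum_abs_div_sum_sub_div_sum_le_of_sum_le _ b a (fun k _ => ha k) h

/-- ℓ¹ stability of normalization: for nonnegative `a, b : Fin T → ℝ`
with positive total masses `A = ∑_k a k` and `B = ∑_k b k`,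
`∑_k |a k / A − b k / B| ≤ 2 · (∑_k |a k − b k|) / max A B`. -/
theorem normalization_l1_stability
    {T : ℕ} (hT : 1 ≤ T)
    (a b : Fin T → ℝ) (ha : ∀ k, 0 ≤ a k) (hb : ∀ k, 0 ≤ b k)
    (hA : 0 < ∑ k, a k) (hB : 0 < ∑ k, b k) :
    ∑ k, |a k / (∑ j, a j) - b k / (∑ j, b j)| ≤
      2 * (∑ k, |a k - b k|) / max (∑ k, a k) (∑ k, b k) :=
  normalization_l1_stability_general a b ha hb
end

section
/- Spectral entropy stability under small perturbations (precise form of the paper's SE-stability proposition): let x ∈ ℝ^T be nonzero, let ε > 0, and let d ∈ ℝ^T satisfy ‖d‖ ≤ ε‖x‖ in Euclidean norm. Let δ ∈ (0, e⁻¹] and assume the normalized powers satisfy p_k(x) ≥ δ and p_k(x + d) ≥ δ for every k. Then |SE(x + d) − SE(x)| ≤ 2·ε·(2 + ε)·log(1/δ). -/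
open scoped RealInnerProductSpace BigOperators

/-- Normalized power spectrum `p_k(x) = P_k(x) / ∑_j P_j(x)` with
`P_k(x) = ⟪u k, x⟫²` for an orthonormal basis `u` of `ℝ^T`. -/
noncomputable def normPower {T : ℕ}
    (u : OrthonormalBasis (Fin T) ℝ (EuclideanSpace ℝ (Fin T)))
    (x : EuclideanSpace ℝ (Fin T)) (k : Fin T) : ℝ :=
  ⟪u k, x⟫ ^ 2 / ∑ j : Fin T, ⟪u j, x⟫ ^ 2

/-- Spectral entropy `SE(x) = −∑_k p_k(x) · log p_k(x)`; the convention
`0 · log 0 = 0` holds automatically since `Real.log 0 = 0`. -/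
noncomputable def spectralEntropy {T : ℕ}
    (u : OrthonormalBasis (Fin T) ℝ (EuclideanSpace ℝ (Fin T)))
    (x : EuclideanSpace ℝ (Fin T)) : ℝ :=
  -∑ k : Fin T, normPower u x k * Real.log (normPower u x k)

/-!
The normalized powers of `x` are the squared coordinates `⟪u k, v⟫²` of the unit vector
`v = x / ‖x‖`. Since `p² - q² = (p - q)(p + q)`, Cauchy–Schwarz and Parseval bound the `ℓ¹`
distance between the power spectra of `x` and `x + d` by `‖w - v‖ ‖w + v‖ ≤ 2ε · 2`, where
`w = (x + d) / ‖x + d‖`. On `[δ, 1]` with `δ ≤ e⁻¹` the derivative `log t + 1` of `t log t` is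
bounded by `log (1 / δ)`, so the entropies differ by at most `4 ε log (1 / δ)`.
-/

open Real

theorem Real.one_le_log_one_div {δ : ℝ} (hδ0 : 0 < δ) (hδe : δ ≤ (exp 1)⁻¹) :
    1 ≤ log (1 / δ) := by
  have hlogδ : log δ ≤ -1 := by
    simpa only [log_exp] using log_le_log hδ0 (hδe.trans_eq (exp_neg 1).symm)
  rw [one_div, log_inv]
  linarith

theorem Real.abs_mul_log_sub_mul_log_le {δ s t : ℝ} (hδ0 : 0 < δ) (hδe : δ ≤ (exp 1)⁻¹)
    (hs : s ∈ Set.Icc δ 1) (ht : t ∈ Set.Icc δ 1) :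
    |t * log t - s * log s| ≤ log (1 / δ) * |t - s| := by
  have hlog : 1 ≤ log (1 / δ) := one_le_log_one_div hδ0 hδe
  have hderiv_le : ∀ y ∈ Set.Icc δ 1, ‖log y + 1‖ ≤ log (1 / δ) := fun y hy => by
    have hδy : log δ ≤ log y := log_le_log hδ0 hy.1
    have hy1 : log y ≤ 0 := log_nonpos (hδ0.le.trans hy.1) hy.2
    rw [one_div, log_inv] at hlog ⊢
    rw [norm_eq_abs, abs_le]
    constructor <;> linarith
  simpa only [norm_eq_abs] using Convex.norm_image_sub_le_of_norm_hasDerivWithin_le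
    (fun y hy => (hasDerivAt_mul_log (hδ0.trans_le hy.1).ne').hasDerivWithinAt)
    hderiv_le (convex_Icc δ 1) hs ht

theorem norm_inv_norm_smul_sub_inv_norm_smul_le {E : Type*} [NormedAddCommGroup E]
    [NormedSpace ℝ E] {x : E} (hx : x ≠ 0) (y : E) :
    ‖‖y‖⁻¹ • y - ‖x‖⁻¹ • x‖ ≤ 2 * ‖y - x‖ / ‖x‖ := by
  have hx' : 0 < ‖x‖ := norm_pos_iff.mpr hx
  rcases eq_or_ne y 0 with rfl | hy
  · rw [norm_zero, inv_zero, zero_smul, zero_sub, norm_neg, norm_smul, norm_inv, norm_norm,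
      inv_mul_cancel₀ hx'.ne', zero_sub, norm_neg, mul_div_assoc, div_self hx'.ne']
    norm_num
  have hy' : 0 < ‖y‖ := norm_pos_iff.mpr hy
  have hsplit : ‖y‖⁻¹ • y - ‖x‖⁻¹ • x = (‖y‖⁻¹ - ‖x‖⁻¹) • y + ‖x‖⁻¹ • (y - x) := by module
  have hscale : ‖(‖y‖⁻¹ - ‖x‖⁻¹) • y‖ = |‖x‖ - ‖y‖| / ‖x‖ := by
    rw [norm_smul, norm_eq_abs, inv_sub_inv hy'.ne' hx'.ne', abs_div,
      abs_of_pos (mul_pos hy' hx')]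
    field_simp
  calc ‖‖y‖⁻¹ • y - ‖x‖⁻¹ • x‖
      ≤ ‖(‖y‖⁻¹ - ‖x‖⁻¹) • y‖ + ‖‖x‖⁻¹ • (y - x)‖ := hsplit ▸ norm_add_le _ _
    _ = |‖x‖ - ‖y‖| / ‖x‖ + ‖y - x‖ / ‖x‖ := by
      rw [hscale, norm_smul, norm_inv, norm_norm, inv_mul_eq_div]
    _ ≤ ‖y - x‖ / ‖x‖ + ‖y - x‖ / ‖x‖ := by
      gcongr
      rw [norm_sub_rev y x]
      exact abs_norm_sub_norm_le x y
    _ = 2 * ‖y - x‖ / ‖x‖ := by ring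

theorem norm_inv_norm_smul_le_one {E : Type*} [NormedAddCommGroup E] [NormedSpace ℝ E] (x : E) :
    ‖‖x‖⁻¹ • x‖ ≤ 1 := by
  rw [norm_smul, norm_inv, norm_norm]
  exact inv_mul_le_one_of_le₀ le_rfl (norm_nonneg x)

theorem OrthonormalBasis.sum_abs_inner_sq_sub_inner_sq_le {ι E : Type*} [Fintype ι]
    [NormedAddCommGroup E] [InnerProductSpace ℝ E] (u : OrthonormalBasis ι ℝ E) (a b : E) :
    ∑ i, |⟪u i, a⟫ ^ 2 - ⟪u i, b⟫ ^ 2| ≤ ‖a - b‖ * ‖a + b‖ := by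
  have hfactor : ∀ i, |⟪u i, a⟫ ^ 2 - ⟪u i, b⟫ ^ 2| = |⟪u i, a - b⟫| * |⟪u i, a + b⟫| := fun i => by
    rw [sq_sub_sq, inner_add_right, inner_sub_right, abs_mul, mul_comm]
  have hparseval : ∀ c : E, √(∑ i, |⟪u i, c⟫| ^ 2) = ‖c‖ := fun c => by
    simp only [sq_abs, u.sum_sq_inner_right, sqrt_sq (norm_nonneg c)]
  simp only [hfactor]
  simpa only [hparseval] using
    sum_mul_le_sqrt_mul_sqrt Finset.univ (fun i => |⟪u i, a - b⟫|) (fun i => |⟪u i, a + b⟫|)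

section SpectralEntropy

variable {T : ℕ} (u : OrthonormalBasis (Fin T) ℝ (EuclideanSpace ℝ (Fin T)))

theorem normPower_eq_inner_sq (x : EuclideanSpace ℝ (Fin T)) (k : Fin T) :
    normPower u x k = ⟪u k, ‖x‖⁻¹ • x⟫ ^ 2 := by
  rw [normPower, u.sum_sq_inner_right, real_inner_smul_right, mul_pow, inv_pow, inv_mul_eq_div]

theorem normPower_le_one (x : EuclideanSpace ℝ (Fin T)) (k : Fin T) : normPower u x k ≤ 1 :=
  div_le_one_of_le₀ (Finset.single_le_sum (fun j _ => sq_nonneg ⟪u j, x⟫) (Finset.mem_univ k))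
    (Finset.sum_nonneg fun _ _ => sq_nonneg _)

theorem sum_abs_normPower_sub_le {x : EuclideanSpace ℝ (Fin T)} (hx : x ≠ 0)
    (y : EuclideanSpace ℝ (Fin T)) :
    ∑ k, |normPower u y k - normPower u x k| ≤ 4 * ‖y - x‖ / ‖x‖ := by
  simp only [normPower_eq_inner_sq]
  have hsum : ‖‖y‖⁻¹ • y + ‖x‖⁻¹ • x‖ ≤ 2 :=
    (norm_add_le _ _).trans (by linarith [norm_inv_norm_smul_le_one y, norm_inv_norm_smul_le_one x])
  calc _ ≤ ‖‖y‖⁻¹ • y - ‖x‖⁻¹ • x‖ * ‖‖y‖⁻¹ • y + ‖x‖⁻¹ • x‖ :=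
        u.sum_abs_inner_sq_sub_inner_sq_le _ _
    _ ≤ 2 * ‖y - x‖ / ‖x‖ * 2 :=
        mul_le_mul (norm_inv_norm_smul_sub_inv_norm_smul_le hx y) hsum (norm_nonneg _)
          (by positivity)
    _ = 4 * ‖y - x‖ / ‖x‖ := by ring

theorem abs_spectralEntropy_sub_le {δ : ℝ} (hδ0 : 0 < δ) (hδe : δ ≤ (exp 1)⁻¹)
    {x y : EuclideanSpace ℝ (Fin T)} (hx : ∀ k, δ ≤ normPower u x k)
    (hy : ∀ k, δ ≤ normPower u y k) :
    |spectralEntropy u y - spectralEntropy u x| ≤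
      log (1 / δ) * ∑ k, |normPower u y k - normPower u x k| := by
  rw [spectralEntropy, spectralEntropy, neg_sub_neg, ← Finset.sum_sub_distrib, Finset.mul_sum,
    ← abs_neg, ← Finset.sum_neg_distrib]
  refine (Finset.abs_sum_le_sum_abs _ _).trans (Finset.sum_le_sum fun k _ => ?_)
  rw [neg_sub]
  exact abs_mul_log_sub_mul_log_le hδ0 hδe ⟨hx k, normPower_le_one u x k⟩
    ⟨hy k, normPower_le_one u y k⟩

end SpectralEntropy

theorem spectral_entropy_stability_general
    {T : ℕ}
    (u : OrthonormalBasis (Fin T) ℝ (EuclideanSpace ℝ (Fin T)))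
    (x : EuclideanSpace ℝ (Fin T)) (hx : x ≠ 0)
    (ε : ℝ) (hε : 0 < ε)
    (d : EuclideanSpace ℝ (Fin T)) (hd : ‖d‖ ≤ ε * ‖x‖)
    (δ : ℝ) (hδ0 : 0 < δ) (hδe : δ ≤ (Real.exp 1)⁻¹)
    (hpx : ∀ k, δ ≤ normPower u x k)
    (hpxd : ∀ k, δ ≤ normPower u (x + d) k) :
    |spectralEntropy u (x + d) - spectralEntropy u x| ≤
      2 * ε * (2 + ε) * Real.log (1 / δ) := by
  have hlog : 0 ≤ log (1 / δ) := zero_le_one.trans (one_le_log_one_div hδ0 hδe)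
  have hrel : ‖d‖ / ‖x‖ ≤ ε := div_le_of_le_mul₀ (norm_nonneg x) hε.le hd
  have hl1 := sum_abs_normPower_sub_le u hx (x + d)
  rw [add_sub_cancel_left, mul_div_assoc] at hl1
  calc |spectralEntropy u (x + d) - spectralEntropy u x|
      ≤ log (1 / δ) * (4 * (‖d‖ / ‖x‖)) :=
        (abs_spectralEntropy_sub_le u hδ0 hδe hpx hpxd).trans (by gcongr)
    _ ≤ log (1 / δ) * (4 * ε) := by gcongr
    _ ≤ 2 * ε * (2 + ε) * log (1 / δ) := by nlinarith [mul_nonneg (sq_nonneg ε) hlog]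

/-- Spectral entropy stability under small perturbations: for
nonzero `x ∈ ℝ^T`, `ε > 0`, and `d` with `‖d‖ ≤ ε‖x‖` (Euclidean norm), if
`δ ∈ (0, e⁻¹]` and the normalized powers satisfy `p_k(x) ≥ δ` and
`p_k(x + d) ≥ δ` for every `k`, then
`|SE(x + d) − SE(x)| ≤ 2·ε·(2 + ε)·log(1/δ)`. -/
theorem spectral_entropy_stability
    {T : ℕ} (hT : 1 ≤ T)
    (u : OrthonormalBasis (Fin T) ℝ (EuclideanSpace ℝ (Fin T)))
    (x : EuclideanSpace ℝ (Fin T)) (hx : x ≠ 0)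
    (ε : ℝ) (hε : 0 < ε)
    (d : EuclideanSpace ℝ (Fin T)) (hd : ‖d‖ ≤ ε * ‖x‖)
    (δ : ℝ) (hδ0 : 0 < δ) (hδe : δ ≤ (Real.exp 1)⁻¹)
    (hpx : ∀ k, δ ≤ normPower u x k)
    (hpxd : ∀ k, δ ≤ normPower u (x + d) k) :
    |spectralEntropy u (x + d) - spectralEntropy u x| ≤
      2 * ε * (2 + ε) * Real.log (1 / δ) :=
  spectral_entropy_stability_general u x hx ε hε d hd δ hδ0 hδe hpx hpxd
end
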